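/- arXiv:1903.04100 — 6 statements merged into one kernel-verified Lean document; each statement's English description precedes it below -/
import Mathlib

section
/- Let f : ℝⁿ → ℝ be twice continuously differentiable, m > 0, γ ≥ 0, h > 0. Define the classical-momentum (heavy-ball) step Ψ : ℝⁿ × ℝⁿ → ℝⁿ × ℝⁿ by Ψ(x, p) = (X, P) where P = e^{−γh} p − h ∇f(x) and X = x + (h/m) P. Then Ψ is a conformal symplectic map with factor e^{−γh}: for every (x, p) and all tangent vectors ξ, η ∈ ℝⁿ × ℝⁿ, ω(DΨ(x,p) ξ, DΨ(x,p) η) = e^{−γh} ω(ξ, η), where DΨ(x,p) denotes the Fréchet derivative of Ψ at (x, p). -/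
open scoped InnerProductSpace

/-- The standard symplectic form on `ℝⁿ × ℝⁿ`: `ω((a,b),(c,d)) = ⟨a,d⟩ − ⟨b,c⟩`. -/
noncomputable def sympForm {n : ℕ}
    (u v : EuclideanSpace ℝ (Fin n) × EuclideanSpace ℝ (Fin n)) : ℝ :=
  ⟪u.1, v.2⟫_ℝ - ⟪u.2, v.1⟫_ℝ

/-!
The heavy-ball step is a kick `(x, p) ↦ (x, e^{-γh} p - h ∇f(x))` followed by the drift
`(x, P) ↦ (x + (h/m) P, P)`. The drift is a linear shear and preserves `ω`. The derivative of
the kick is `(a, b) ↦ (a, e^{-γh} b - h H a)` with `H` the Hessian of `f`; since `H` is symmetric,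
the terms in `H` cancel in `ω` and what remains is `e^{-γh} ω`.
-/

section Hessian

variable {E : Type*} [NormedAddCommGroup E] [InnerProductSpace ℝ E] [CompleteSpace E]
  {f : E → ℝ} {x : E}

/-- Over `ℝ` the conjugate-linear Riesz map is linear: `starRingEnd ℝ` is `RingHom.id ℝ`
definitionally. -/
noncomputable def rieszCLM : StrongDual ℝ E →L[ℝ] E :=
  (InnerProductSpace.toDual ℝ E).symm.toContinuousLinearEquiv.toContinuousLinearMap

theorem inner_rieszCLM_apply (φ : StrongDual ℝ E) (w : E) : ⟪rieszCLM φ, w⟫_ℝ = φ w :=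
  InnerProductSpace.toDual_symm_apply

theorem hasFDerivAt_gradient (hf : ContDiffAt ℝ 2 f x) :
    HasFDerivAt (gradient f) (rieszCLM ∘L fderiv ℝ (fderiv ℝ f) x) x :=
  rieszCLM.hasFDerivAt.comp x
    ((hf.fderiv_right (m := 1) le_rfl).differentiableAt one_ne_zero).hasFDerivAt

theorem isSymmetric_fderiv_gradient (hf : ContDiffAt ℝ 2 f x) :
    (fderiv ℝ (gradient f) x : E →ₗ[ℝ] E).IsSymmetric := by
  intro v w
  have hsymm : IsSymmSndFDerivAt ℝ f x := hf.isSymmSndFDerivAt (by simp)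
  simp only [ContinuousLinearMap.coe_coe, (hasFDerivAt_gradient hf).fderiv,
    ContinuousLinearMap.comp_apply]
  rw [real_inner_comm _ v, inner_rieszCLM_apply, inner_rieszCLM_apply]
  exact hsymm v w

end Hessian

section LinearMaps

open ContinuousLinearMap

variable {R M : Type*} [CommRing R] [AddCommGroup M] [Module R M]
  [TopologicalSpace M] [IsTopologicalAddGroup M] [ContinuousConstSMul R M]

def shearCLM (t : R) : M × M →L[R] M × M :=
  (fst R M M + t • snd R M M).prod (snd R M M)

def kickCLM (c : R) (S : M →L[R] M) : M × M →L[R] M × M :=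
  (fst R M M).prod (c • snd R M M - S ∘L fst R M M)

@[simp]
theorem shearCLM_apply (t : R) (ξ : M × M) : shearCLM t ξ = (ξ.1 + t • ξ.2, ξ.2) := rfl

@[simp]
theorem kickCLM_apply (c : R) (S : M →L[R] M) (ξ : M × M) :
    kickCLM c S ξ = (ξ.1, c • ξ.2 - S ξ.1) := rfl

end LinearMaps

theorem hasFDerivAt_kick {E : Type*} [NormedAddCommGroup E] [NormedSpace ℝ E]
    {g : E → E} {g' : E →L[ℝ] E} {z : E × E} (hg : HasFDerivAt g g' z.1) (c : ℝ) :
    HasFDerivAt (fun q : E × E => (q.1, c • q.2 - g q.1)) (kickCLM c g') z :=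
  hasFDerivAt_fst.prodMk ((hasFDerivAt_snd.const_smul c).sub (hg.comp z hasFDerivAt_fst))

section ConformalSymplectic

variable {n : ℕ}

local notation "V" => EuclideanSpace ℝ (Fin n)

def IsConformalSymplectic (ν : ℝ) (L : V × V →L[ℝ] V × V) : Prop :=
  ∀ ξ η, sympForm (L ξ) (L η) = ν * sympForm ξ η

theorem IsConformalSymplectic.comp {ν μ : ℝ} {L K : V × V →L[ℝ] V × V}
    (hL : IsConformalSymplectic ν L) (hK : IsConformalSymplectic μ K) :
    IsConformalSymplectic (ν * μ) (L ∘L K) := fun ξ η => by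
  rw [ContinuousLinearMap.comp_apply, ContinuousLinearMap.comp_apply, hL, hK, mul_assoc]

theorem isConformalSymplectic_shearCLM (t : ℝ) :
    IsConformalSymplectic 1 (shearCLM t : V × V →L[ℝ] V × V) := by
  intro ξ η
  simp only [shearCLM_apply, sympForm, inner_add_left, inner_add_right, real_inner_smul_left,
    real_inner_smul_right]
  ring

theorem isConformalSymplectic_kickCLM (c : ℝ) {S : V →L[ℝ] V}
    (hS : (S : V →ₗ[ℝ] V).IsSymmetric) : IsConformalSymplectic c (kickCLM c S) := by
  intro ξ η
  simp only [kickCLM_apply, sympForm, inner_sub_left, inner_sub_right, real_inner_smul_left,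
    real_inner_smul_right]
  rw [← ContinuousLinearMap.coe_coe S, hS ξ.1 η.1]
  ring

end ConformalSymplectic

theorem heavyBall_conformal_symplectic_general
    {n : ℕ} (f : EuclideanSpace ℝ (Fin n) → ℝ) (hf : ContDiff ℝ 2 f)
    (m γ h : ℝ)
    (Ψ : EuclideanSpace ℝ (Fin n) × EuclideanSpace ℝ (Fin n) →
         EuclideanSpace ℝ (Fin n) × EuclideanSpace ℝ (Fin n))
    (hΨ : ∀ x p, Ψ (x, p) =
      (x + (h / m) • (Real.exp (-γ * h) • p - h • gradient f x),
        Real.exp (-γ * h) • p - h • gradient f x)) :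
    ∀ (z ξ η : EuclideanSpace ℝ (Fin n) × EuclideanSpace ℝ (Fin n)),
      sympForm (fderiv ℝ Ψ z ξ) (fderiv ℝ Ψ z η)
        = Real.exp (-γ * h) * sympForm ξ η := by
  intro z ξ η
  have hΨ_comp : Ψ = shearCLM (h / m) ∘
      fun q => (q.1, Real.exp (-γ * h) • q.2 - (h • gradient f) q.1) :=
    funext fun q => hΨ q.1 q.2
  have hf₂ : ContDiffAt ℝ 2 f z.1 := hf.contDiffAt
  have hDΨ : HasFDerivAt Ψ
      (shearCLM (h / m) ∘L kickCLM (Real.exp (-γ * h)) (h • fderiv ℝ (gradient f) z.1)) z := by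
    rw [hΨ_comp]
    exact (shearCLM (h / m)).hasFDerivAt.comp z
      (hasFDerivAt_kick ((hasFDerivAt_gradient hf₂).differentiableAt.hasFDerivAt.const_smul h) _)
  have hsymp := (isConformalSymplectic_shearCLM (h / m)).comp
    (isConformalSymplectic_kickCLM (Real.exp (-γ * h)) (S := h • fderiv ℝ (gradient f) z.1)
      ((isSymmetric_fderiv_gradient hf₂).smul (RCLike.conj_to_real (x := h))))
  rw [hDΨ.fderiv, hsymp ξ η, one_mul]

/-- the heavy-ball (classical momentum) step
`P = e^{−γh} p − h ∇f(x)`, `X = x + (h/m) P` is conformal symplectic with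
factor `e^{−γh}`. -/
theorem heavyBall_conformal_symplectic
    {n : ℕ} (f : EuclideanSpace ℝ (Fin n) → ℝ) (hf : ContDiff ℝ 2 f)
    (m γ h : ℝ) (hm : 0 < m) (hγ : 0 ≤ γ) (hh : 0 < h)
    (Ψ : EuclideanSpace ℝ (Fin n) × EuclideanSpace ℝ (Fin n) →
         EuclideanSpace ℝ (Fin n) × EuclideanSpace ℝ (Fin n))
    (hΨ : ∀ x p, Ψ (x, p) =
      (x + (h / m) • (Real.exp (-γ * h) • p - h • gradient f x),
        Real.exp (-γ * h) • p - h • gradient f x)) :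
    ∀ (z ξ η : EuclideanSpace ℝ (Fin n) × EuclideanSpace ℝ (Fin n)),
      sympForm (fderiv ℝ Ψ z ξ) (fderiv ℝ Ψ z η)
        = Real.exp (-γ * h) * sympForm ξ η :=
  heavyBall_conformal_symplectic_general f hf m γ h Ψ hΨ
end

section
/- Let f : ℝⁿ → ℝ be twice continuously differentiable, m > 0, γ ≥ 0, c > 0, h > 0. Define the relativistic heavy-ball step Ψ : ℝⁿ × ℝⁿ → ℝⁿ × ℝⁿ by Ψ(x, p) = (X, P) where P = e^{−γh} p − h ∇f(x) and X = x + h c P / √(‖P‖² + m²c²). Then Ψ is conformal symplectic with factor e^{−γh}: for every (x, p) and all ξ, η ∈ ℝⁿ × ℝⁿ, ω(DΨ(x,p) ξ, DΨ(x,p) η) = e^{−γh} ω(ξ, η). -/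
/-!
`Ψ` is the kick `(x, p) ↦ (x, e^{−γh} p − h ∇f(x))` followed by the drift
`(x, P) ↦ (x + h ∇K(P), P)`, where `K(p) = c √(‖p‖² + m²c²)` is the relativistic kinetic energy.
Both linearizations are shears by the Hessian of a `C²` function, which is symmetric; hence the
kick multiplies `ω` by `e^{−γh}` and the drift preserves it.
-/

open scoped InnerProductSpace

open InnerProductSpace ContinuousLinearMap

section Gradient

variable {F : Type*} [NormedAddCommGroup F] [InnerProductSpace ℝ F] [CompleteSpace F]
  {g : F → ℝ} {a : F}

theorem inner_fderiv_gradient_apply (u v : F) :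
    ⟪fderiv ℝ (gradient g) a u, v⟫_ℝ = fderiv ℝ (fderiv ℝ g) a u v := by
  change ⟪fderiv ℝ ((toDual ℝ F).symm ∘ fderiv ℝ g) a u, v⟫_ℝ = _
  rw [LinearIsometryEquiv.comp_fderiv]
  exact toDual_symm_apply

theorem ContDiffAt.differentiableAt_gradient (hg : ContDiffAt ℝ 2 g a) :
    DifferentiableAt ℝ (gradient g) a :=
  ((toDual ℝ F).symm.differentiableAt).comp a
    ((hg.fderiv_right (m := 1) le_rfl).differentiableAt one_ne_zero)

theorem ContDiffAt.isSymmetric_fderiv_gradient (hg : ContDiffAt ℝ 2 g a) :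
    (fderiv ℝ (gradient g) a : F →ₗ[ℝ] F).IsSymmetric := fun u v => by
  rw [ContinuousLinearMap.coe_coe, inner_fderiv_gradient_apply,
    real_inner_comm (fderiv ℝ (gradient g) a v), inner_fderiv_gradient_apply]
  exact hg.isSymmSndFDerivAt (by simp) u v

end Gradient

section Kinetic

variable {F : Type*} [NormedAddCommGroup F] [InnerProductSpace ℝ F]

noncomputable def relativisticKineticEnergy (m c : ℝ) (p : F) : ℝ :=
  c * √(‖p‖ ^ 2 + m ^ 2 * c ^ 2)

theorem hasGradientAt_relativisticKineticEnergy [CompleteSpace F] {m c : ℝ} (hm : m ≠ 0)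
    (hc : c ≠ 0) (p : F) :
    HasGradientAt (relativisticKineticEnergy m c)
      ((c / √(‖p‖ ^ 2 + m ^ 2 * c ^ 2)) • p) p := by
  have hpos : 0 < ‖p‖ ^ 2 + m ^ 2 * c ^ 2 := by positivity
  have hK := (((hasFDerivAt_id p).norm_sq.add_const (m ^ 2 * c ^ 2)).sqrt hpos.ne').const_mul c
  rw [hasGradientAt_iff_hasFDerivAt]
  refine hK.congr_fderiv (ContinuousLinearMap.ext fun v => ?_)
  simp only [id_eq, one_div, mul_inv_rev, comp_id, smul_apply, coe_innerSL_apply, nsmul_eq_mul,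
    Nat.cast_ofNat, smul_eq_mul, map_smul, toDual_apply_apply]
  field_simp

theorem contDiff_relativisticKineticEnergy {m c : ℝ} (hm : m ≠ 0) (hc : c ≠ 0) :
    ContDiff ℝ 2 (relativisticKineticEnergy (F := F) m c) :=
  contDiff_const.mul <| contDiff_iff_contDiffAt.2 fun p =>
    ((contDiff_norm_sq ℝ).add contDiff_const).contDiffAt.sqrt (by positivity)

end Kinetic

namespace SymplecticEuler

variable {E : Type*} [NormedAddCommGroup E] [NormedSpace ℝ E] {n : ℕ}

def kick (e h : ℝ) (G : E → E) (z : E × E) : E × E :=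
  (z.1, e • z.2 - h • G z.1)

def drift (h : ℝ) (G : E → E) (z : E × E) : E × E :=
  (z.1 + h • G z.2, z.2)

def kickCLM (e h : ℝ) (H : E →L[ℝ] E) : E × E →L[ℝ] E × E :=
  (fst ℝ E E).prod (e • snd ℝ E E - h • H ∘L fst ℝ E E)

def driftCLM (h : ℝ) (S : E →L[ℝ] E) : E × E →L[ℝ] E × E :=
  (fst ℝ E E + h • S ∘L snd ℝ E E).prod (snd ℝ E E)

@[simp]
theorem kickCLM_apply (e h : ℝ) (H : E →L[ℝ] E) (ξ : E × E) :
    kickCLM e h H ξ = (ξ.1, e • ξ.2 - h • H ξ.1) :=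
  rfl

@[simp]
theorem driftCLM_apply (h : ℝ) (S : E →L[ℝ] E) (ξ : E × E) :
    driftCLM h S ξ = (ξ.1 + h • S ξ.2, ξ.2) :=
  rfl

theorem hasFDerivAt_kick {e h : ℝ} {G : E → E} {H : E →L[ℝ] E} {z : E × E}
    (hG : HasFDerivAt G H z.1) : HasFDerivAt (kick e h G) (kickCLM e h H) z :=
  hasFDerivAt_fst.prodMk <|
    (hasFDerivAt_snd.const_smul e).sub ((hG.comp z hasFDerivAt_fst).const_smul h)

theorem hasFDerivAt_drift {h : ℝ} {G : E → E} {S : E →L[ℝ] E} {z : E × E}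
    (hG : HasFDerivAt G S z.2) : HasFDerivAt (drift h G) (driftCLM h S) z :=
  (hasFDerivAt_fst.add ((hG.comp z hasFDerivAt_snd).const_smul h)).prodMk hasFDerivAt_snd

theorem sympForm_kickCLM (e h : ℝ) {H : EuclideanSpace ℝ (Fin n) →L[ℝ] EuclideanSpace ℝ (Fin n)}
    (hH : (H : EuclideanSpace ℝ (Fin n) →ₗ[ℝ] EuclideanSpace ℝ (Fin n)).IsSymmetric)
    (ξ η : EuclideanSpace ℝ (Fin n) × EuclideanSpace ℝ (Fin n)) :
    sympForm (kickCLM e h H ξ) (kickCLM e h H η) = e * sympForm ξ η := by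
  have hH₁ := hH ξ.1 η.1
  simp only [sympForm, kickCLM_apply, inner_sub_left, inner_sub_right, real_inner_smul_left,
    real_inner_smul_right, ContinuousLinearMap.coe_coe] at hH₁ ⊢
  rw [hH₁]
  ring

theorem sympForm_driftCLM (h : ℝ) {S : EuclideanSpace ℝ (Fin n) →L[ℝ] EuclideanSpace ℝ (Fin n)}
    (hS : (S : EuclideanSpace ℝ (Fin n) →ₗ[ℝ] EuclideanSpace ℝ (Fin n)).IsSymmetric)
    (ξ η : EuclideanSpace ℝ (Fin n) × EuclideanSpace ℝ (Fin n)) :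
    sympForm (driftCLM h S ξ) (driftCLM h S η) = sympForm ξ η := by
  have hS₂ := hS ξ.2 η.2
  simp only [sympForm, driftCLM_apply, inner_add_left, inner_add_right, real_inner_smul_left,
    real_inner_smul_right, ContinuousLinearMap.coe_coe] at hS₂ ⊢
  rw [hS₂]
  ring

end SymplecticEuler

open SymplecticEuler

theorem relativistic_heavyBall_conformal_symplectic_general
    {n : ℕ} (f : EuclideanSpace ℝ (Fin n) → ℝ) (hf : ContDiff ℝ 2 f)
    (m γ c h : ℝ) (hm : 0 < m) (hc : 0 < c)
    (Ψ : EuclideanSpace ℝ (Fin n) × EuclideanSpace ℝ (Fin n) →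
         EuclideanSpace ℝ (Fin n) × EuclideanSpace ℝ (Fin n))
    (hΨ : ∀ x p, Ψ (x, p) =
      (x + (h * c / Real.sqrt (‖Real.exp (-γ * h) • p - h • gradient f x‖ ^ 2 + m ^ 2 * c ^ 2)) •
          (Real.exp (-γ * h) • p - h • gradient f x),
        Real.exp (-γ * h) • p - h • gradient f x)) :
    ∀ (z ξ η : EuclideanSpace ℝ (Fin n) × EuclideanSpace ℝ (Fin n)),
      sympForm (fderiv ℝ Ψ z ξ) (fderiv ℝ Ψ z η)
        = Real.exp (-γ * h) * sympForm ξ η := by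
  intro z ξ η
  set e := Real.exp (-γ * h)
  set K := relativisticKineticEnergy (F := EuclideanSpace ℝ (Fin n)) m c
  have hΨ_split : Ψ = drift h (gradient K) ∘ kick e h (gradient f) := by
    funext ⟨x, p⟩
    rw [hΨ, Function.comp_apply, kick, drift,
      (hasGradientAt_relativisticKineticEnergy hm.ne' hc.ne' _).gradient, smul_smul,
      mul_div_assoc]
  have hf_at := hf.contDiffAt (x := z.1)
  have hK_at := (contDiff_relativisticKineticEnergy (F := EuclideanSpace ℝ (Fin n)) hm.ne'
    hc.ne').contDiffAt (x := (kick e h (gradient f) z).2)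
  have hDΨ := (hasFDerivAt_drift (h := h) hK_at.differentiableAt_gradient.hasFDerivAt).comp z
    (hasFDerivAt_kick (e := e) (h := h) hf_at.differentiableAt_gradient.hasFDerivAt)
  rw [hΨ_split, hDΨ.fderiv, comp_apply, comp_apply,
    sympForm_driftCLM h hK_at.isSymmetric_fderiv_gradient,
    sympForm_kickCLM e h hf_at.isSymmetric_fderiv_gradient]

/-- the relativistic heavy-ball step
`P = e^{−γh} p − h ∇f(x)`, `X = x + h c P / √(‖P‖² + m²c²)` is conformal
symplectic with factor `e^{−γh}`. -/
theorem relativistic_heavyBall_conformal_symplectic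
    {n : ℕ} (f : EuclideanSpace ℝ (Fin n) → ℝ) (hf : ContDiff ℝ 2 f)
    (m γ c h : ℝ) (hm : 0 < m) (hγ : 0 ≤ γ) (hc : 0 < c) (hh : 0 < h)
    (Ψ : EuclideanSpace ℝ (Fin n) × EuclideanSpace ℝ (Fin n) →
         EuclideanSpace ℝ (Fin n) × EuclideanSpace ℝ (Fin n))
    (hΨ : ∀ x p, Ψ (x, p) =
      (x + (h * c / Real.sqrt (‖Real.exp (-γ * h) • p - h • gradient f x‖ ^ 2 + m ^ 2 * c ^ 2)) •
          (Real.exp (-γ * h) • p - h • gradient f x),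
        Real.exp (-γ * h) • p - h • gradient f x)) :
    ∀ (z ξ η : EuclideanSpace ℝ (Fin n) × EuclideanSpace ℝ (Fin n)),
      sympForm (fderiv ℝ Ψ z ξ) (fderiv ℝ Ψ z η)
        = Real.exp (-γ * h) * sympForm ξ η :=
  relativistic_heavyBall_conformal_symplectic_general f hf m γ c h hm hc Ψ hΨ
end

section
/- Let f : ℝⁿ → ℝ be twice continuously differentiable, m > 0, γ ≥ 0, h > 0, and let Ψ be the Nesterov phase-space step Ψ(x, p) = (X, P) with x_{1/2} = x + (h/m) e^{−γh} p, P = e^{−γh} p − h ∇f(x_{1/2}), X = x + (h/m) P. Then the Jacobian determinant of Ψ at every point (x, p) equals det DΨ(x, p) = e^{−nγh} · det( I − (h²/m) ∇²f(x_{1/2}) ), where I is the n × n identity matrix. -/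
/-! The Jacobian of the step factors as the shear `(ξ, π) ↦ (ξ + (h/m) π, π)` after the block
lower-triangular map `(ξ, π) ↦ (ξ, -h A ξ + e^{-γh} (I - (h²/m) A) π)`, where `A = ∇²f(x_{1/2})`
is the derivative of `∇f` at the midpoint. The shear has determinant `1` and the triangular map
has determinant `det (e^{-γh} I) · det (I - (h²/m) A)`. -/

/-- Nesterov's accelerated gradient step in phase space:
`x_{1/2} = x + (h/m) e^{−γh} p`, `P = e^{−γh} p − h ∇f(x_{1/2})`,
`X = x + (h/m) P`. -/
noncomputable def nesterovStep {n : ℕ} (f : EuclideanSpace ℝ (Fin n) → ℝ) (m γ h : ℝ)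
    (z : EuclideanSpace ℝ (Fin n) × EuclideanSpace ℝ (Fin n)) :
    EuclideanSpace ℝ (Fin n) × EuclideanSpace ℝ (Fin n) :=
  let P := Real.exp (-γ * h) • z.2 - h • gradient f (z.1 + (h / m) • (Real.exp (-γ * h) • z.2))
  (z.1 + (h / m) • P, P)

namespace LinearMap

theorem toMatrix_prod_coprod {R M₁ M₂ ι₁ ι₂ : Type*} [CommSemiring R]
    [AddCommMonoid M₁] [Module R M₁] [AddCommMonoid M₂] [Module R M₂]
    [Fintype ι₁] [Fintype ι₂] [DecidableEq ι₁] [DecidableEq ι₂]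
    (b₁ : Module.Basis ι₁ R M₁) (b₂ : Module.Basis ι₂ R M₂)
    (A : M₁ →ₗ[R] M₁) (B : M₂ →ₗ[R] M₁) (C : M₁ →ₗ[R] M₂) (D : M₂ →ₗ[R] M₂) :
    toMatrix (b₁.prod b₂) (b₁.prod b₂) ((A.coprod B).prod (C.coprod D)) =
      Matrix.fromBlocks (toMatrix b₁ b₁ A) (toMatrix b₂ b₁ B) (toMatrix b₁ b₂ C)
        (toMatrix b₂ b₂ D) := by
  ext (i | i) (j | j) <;> simp [toMatrix]

variable {R M₁ M₂ : Type*} [CommRing R] [AddCommGroup M₁] [Module R M₁]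
  [AddCommGroup M₂] [Module R M₂]
  [Module.Free R M₁] [Module.Free R M₂] [Module.Finite R M₁] [Module.Finite R M₂]

theorem det_prod_coprod_zero₂₁ (A : M₁ →ₗ[R] M₁) (B : M₂ →ₗ[R] M₁) (D : M₂ →ₗ[R] M₂) :
    LinearMap.det ((A.coprod B).prod ((0 : M₁ →ₗ[R] M₂).coprod D)) =
      LinearMap.det A * LinearMap.det D := by
  let b₁ := Module.Free.chooseBasis R M₁
  let b₂ := Module.Free.chooseBasis R M₂
  rw [← det_toMatrix (b₁.prod b₂), ← det_toMatrix b₁, ← det_toMatrix b₂, toMatrix_prod_coprod,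
    map_zero, Matrix.det_fromBlocks_zero₂₁]

theorem det_prod_coprod_zero₁₂ (A : M₁ →ₗ[R] M₁) (C : M₁ →ₗ[R] M₂) (D : M₂ →ₗ[R] M₂) :
    LinearMap.det ((A.coprod (0 : M₂ →ₗ[R] M₁)).prod (C.coprod D)) =
      LinearMap.det A * LinearMap.det D := by
  let b₁ := Module.Free.chooseBasis R M₁
  let b₂ := Module.Free.chooseBasis R M₂
  rw [← det_toMatrix (b₁.prod b₂), ← det_toMatrix b₁, ← det_toMatrix b₂, toMatrix_prod_coprod,
    map_zero, Matrix.det_fromBlocks_zero₁₂]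

end LinearMap

section

variable {𝕜 E : Type*} [NontriviallyNormedField 𝕜] [NormedAddCommGroup E] [NormedSpace 𝕜 E]

def nesterovStepFDeriv (A : E →L[𝕜] E) (a c h : 𝕜) : E × E →L[𝕜] E × E :=
  let P := a • .snd 𝕜 E E - h • A.comp (.fst 𝕜 E E + c • a • .snd 𝕜 E E)
  (.fst 𝕜 E E + c • P).prod P

theorem nesterovStepFDeriv_eq_comp (A : E →L[𝕜] E) (a c h : 𝕜) :
    (nesterovStepFDeriv A a c h : E × E →ₗ[𝕜] E × E) =
      (LinearMap.id.coprod (c • LinearMap.id)).prod ((0 : E →ₗ[𝕜] E).coprod LinearMap.id) ∘ₗ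
        (LinearMap.id.coprod (0 : E →ₗ[𝕜] E)).prod
          ((-h • (A : E →ₗ[𝕜] E)).coprod (a • (LinearMap.id - (h * c) • (A : E →ₗ[𝕜] E)))) := by
  refine LinearMap.ext fun z => Prod.ext ?_ ?_ <;>
    simp only [nesterovStepFDeriv, ContinuousLinearMap.comp_add, ContinuousLinearMap.comp_smulₛₗ,
      RingHom.id_apply, smul_add, ContinuousLinearMap.coe_prod, ContinuousLinearMap.toLinearMap_add,
      ContinuousLinearMap.coe_fst, ContinuousLinearMap.toLinearMap_smul,
      ContinuousLinearMap.toLinearMap_sub, ContinuousLinearMap.coe_snd,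
      ContinuousLinearMap.toLinearMap_comp, LinearMap.prod_apply, Function.prod_apply,
      LinearMap.add_apply, LinearMap.fst_apply, LinearMap.smul_apply, LinearMap.sub_apply,
      LinearMap.snd_apply, LinearMap.coe_comp, ContinuousLinearMap.coe_coe, LinearMap.coe_fst,
      Function.comp_apply, LinearMap.coe_snd, neg_smul, LinearMap.coprod_apply, LinearMap.id_coe,
      id_eq, LinearMap.zero_apply, add_zero, LinearMap.neg_apply, smul_neg, zero_add] <;> module

theorem det_nesterovStepFDeriv [FiniteDimensional 𝕜 E] (A : E →L[𝕜] E) (a c h : 𝕜) :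
    LinearMap.det (nesterovStepFDeriv A a c h : E × E →ₗ[𝕜] E × E) =
      a ^ Module.finrank 𝕜 E * LinearMap.det (LinearMap.id - (h * c) • (A : E →ₗ[𝕜] E)) := by
  rw [nesterovStepFDeriv_eq_comp, LinearMap.det_comp, LinearMap.det_prod_coprod_zero₂₁,
    LinearMap.det_prod_coprod_zero₁₂, LinearMap.det_smul]
  simp

end

theorem hasFDerivAt_nesterovStep {n : ℕ} (f : EuclideanSpace ℝ (Fin n) → ℝ) (m γ h : ℝ)
    (x p : EuclideanSpace ℝ (Fin n))
    (hf : DifferentiableAt ℝ (gradient f) (x + (h / m) • (Real.exp (-γ * h) • p))) :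
    HasFDerivAt (nesterovStep f m γ h)
      (nesterovStepFDeriv (fderiv ℝ (gradient f) (x + (h / m) • (Real.exp (-γ * h) • p)))
        (Real.exp (-γ * h)) (h / m) h) (x, p) := by
  have hdamped := (hasFDerivAt_snd (𝕜 := ℝ) (p := (x, p))).const_smul (Real.exp (-γ * h))
  have hmid := hf.hasFDerivAt.comp (x, p) (hasFDerivAt_fst.add (hdamped.const_smul (h / m)))
  have hP := hdamped.sub (hmid.const_smul h)
  exact (hasFDerivAt_fst.add (hP.const_smul (h / m))).prodMk hP

theorem nesterov_jacobian_det_general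
    {n : ℕ} (f : EuclideanSpace ℝ (Fin n) → ℝ) (hf : ContDiff ℝ 2 f)
    (m γ h : ℝ)
    (x p : EuclideanSpace ℝ (Fin n)) :
    LinearMap.det ((fderiv ℝ (nesterovStep f m γ h) (x, p)).toLinearMap)
      = Real.exp (-(n : ℝ) * γ * h) *
        LinearMap.det
          ((LinearMap.id : EuclideanSpace ℝ (Fin n) →ₗ[ℝ] EuclideanSpace ℝ (Fin n))
            - (h ^ 2 / m) •
              (fderiv ℝ (gradient f) (x + (h / m) • (Real.exp (-γ * h) • p))).toLinearMap) := by
  have hgrad : ContDiff ℝ 1 (gradient f) :=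
    (InnerProductSpace.toDual ℝ _).symm.contDiff.comp (hf.fderiv_right (by norm_num))
  rw [(hasFDerivAt_nesterovStep f m γ h x p (hgrad.differentiable one_ne_zero _)).fderiv,
    det_nesterovStepFDeriv, finrank_euclideanSpace_fin, ← Real.exp_nat_mul, mul_div_assoc', ← sq]
  ring_nf

/-- the Jacobian determinant of Nesterov's phase-space step is
`det DΨ(x,p) = e^{−nγh} · det(I − (h²/m) ∇²f(x_{1/2}))`. -/
theorem nesterov_jacobian_det
    {n : ℕ} (f : EuclideanSpace ℝ (Fin n) → ℝ) (hf : ContDiff ℝ 2 f)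
    (m γ h : ℝ) (hm : 0 < m) (hγ : 0 ≤ γ) (hh : 0 < h)
    (x p : EuclideanSpace ℝ (Fin n)) :
    LinearMap.det ((fderiv ℝ (nesterovStep f m γ h) (x, p)).toLinearMap)
      = Real.exp (-(n : ℝ) * γ * h) *
        LinearMap.det
          ((LinearMap.id : EuclideanSpace ℝ (Fin n) →ₗ[ℝ] EuclideanSpace ℝ (Fin n))
            - (h ^ 2 / m) •
              (fderiv ℝ (gradient f) (x + (h / m) • (Real.exp (-γ * h) • p))).toLinearMap) :=
  nesterov_jacobian_det_general f hf m γ h x p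
end

section
/- Let f : ℝⁿ → ℝ be twice continuously differentiable, m > 0, γ ≥ 0, T > 0, and let (x, p) : [0, T] → ℝⁿ × ℝⁿ be a solution of ẋ = p/m, ṗ = −∇f(x) − γ p. For h > 0 define one classical-momentum step from the initial condition: P_h = e^{−γh} p(0) − h ∇f(x(0)), X_h = x(0) + (h/m) P_h. Then the heavy-ball method has local error of order h² (i.e., it is an integrator of order 1): there exist constants C > 0 and ε ∈ (0, T] such that for all h ∈ (0, ε], ‖X_h − x(h)‖ + ‖P_h − p(h)‖ ≤ C h². -/
/-!
For `F (x, p) = (p / m, -∇f x - γ p)` the heavy-ball step is within `O(h²)` of the explicit Euler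
step `z₀ + h F z₀`: the damping factor is `e^{-γh} = 1 - γh + O(h²)`, and the position update uses
the new momentum, which is `p₀ + O(h)`. The Euler step in turn has local error `O(h²)` for every ODE
with a locally Lipschitz field, because along a solution the velocity is Lipschitz in time.
-/

open Set
open scoped NNReal

namespace Real

/-- Multiply out `(1 - a + a²/2)(1 + a + a²/2) = 1 + a⁴/4 ≥ 1` and use `1 + a + a²/2 ≤ exp a`. -/
theorem exp_neg_le_one_sub_add_sq_div_two {a : ℝ} (ha : 0 ≤ a) :
    exp (-a) ≤ 1 - a + a ^ 2 / 2 := by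
  have hexp : 1 + a + a ^ 2 / 2 ≤ exp a := quadratic_le_exp_of_nonneg ha
  rw [exp_neg, inv_le_iff_one_le_mul₀ (exp_pos a)]
  nlinarith [mul_le_mul_of_nonneg_left hexp (by nlinarith : (0 : ℝ) ≤ 1 - a + a ^ 2 / 2)]

theorem abs_exp_neg_sub_one_add_le {a : ℝ} (ha : 0 ≤ a) :
    |exp (-a) - 1 + a| ≤ a ^ 2 / 2 := by
  have := add_one_le_exp (-a)
  rw [abs_of_nonneg (by linarith)]
  linarith [exp_neg_le_one_sub_add_sq_div_two ha]

end Real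

theorem ContDiff.gradient {F : Type*} [NormedAddCommGroup F] [InnerProductSpace ℝ F]
    [CompleteSpace F] {f : F → ℝ} {m n : WithTop ℕ∞} (hf : ContDiff ℝ n f) (hmn : m + 1 ≤ n) :
    ContDiff ℝ m (gradient f) :=
  (InnerProductSpace.toDual ℝ F).symm.contDiff.comp (hf.fderiv_right hmn)

section

variable {E : Type*} [NormedAddCommGroup E] [NormedSpace ℝ E]

theorem norm_sub_sub_smul_le_of_lipschitzOnWith_deriv {g g' : ℝ → E} {a b t : ℝ} {K : ℝ≥0}
    (hg : ∀ s ∈ Icc a b, HasDerivWithinAt g (g' s) (Icc a b) s)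
    (hg' : LipschitzOnWith K g' (Icc a b)) (ht : t ∈ Icc a b) :
    ‖g t - g a - (t - a) • g' a‖ ≤ K * (t - a) ^ 2 := by
  have hsub : Icc a t ⊆ Icc a b := Icc_subset_Icc_right ht.2
  have hderiv : ∀ s ∈ Icc a t,
      HasDerivWithinAt (fun s ↦ g s - (s - a) • g' a) (g' s - g' a) (Icc a t) s := fun s hs ↦
    ((hg s (hsub hs)).mono hsub).sub
      (by simpa using ((hasDerivWithinAt_id s _).sub_const a).smul_const (g' a))
  have hbound : ∀ s ∈ Ico a t, ‖g' s - g' a‖ ≤ K * (t - a) := fun s hs ↦ calc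
    ‖g' s - g' a‖ ≤ K * ‖s - a‖ :=
      hg'.norm_sub_le (hsub (Ico_subset_Icc_self hs)) (left_mem_Icc.2 (ht.1.trans ht.2))
    _ ≤ K * (t - a) := by
      gcongr
      rw [Real.norm_of_nonneg (sub_nonneg.2 hs.1)]
      linarith [hs.2]
  have := norm_image_sub_le_of_norm_deriv_le_segment' hderiv hbound t (right_mem_Icc.2 ht.1)
  simpa [sub_right_comm, pow_two, mul_assoc] using this

/-- The velocity `F ∘ z` is Lipschitz on `[0, T]`: `z` is, its derivative being bounded on the
compact interval, and `F` is Lipschitz on the compact set `z '' [0, T]`. -/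
theorem LocallyLipschitz.exists_norm_add_smul_sub_le {F : E → E} (hF : LocallyLipschitz F)
    {z : ℝ → E} {T : ℝ} (hz : ∀ t ∈ Icc 0 T, HasDerivWithinAt z (F (z t)) (Icc 0 T) t) :
    ∃ K : ℝ≥0, ∀ h ∈ Icc 0 T, ‖z 0 + h • F (z 0) - z h‖ ≤ K * h ^ 2 := by
  have hzc : ContinuousOn z (Icc 0 T) := fun t ht ↦ (hz t ht).continuousWithinAt
  obtain ⟨L, hL⟩ := (hF.locallyLipschitzOn (s := z '' Icc 0 T)).exists_lipschitzOnWith_of_compact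
    (isCompact_Icc.image_of_continuousOn hzc)
  obtain ⟨M, hM⟩ := isCompact_Icc.exists_bound_of_continuousOn
    (hF.continuous.comp_continuousOn hzc)
  have hzL : LipschitzOnWith M.toNNReal z (Icc 0 T) :=
    (convex_Icc 0 T).lipschitzOnWith_of_nnnorm_hasDerivWithin_le hz fun t ht ↦ by
      rw [← NNReal.coe_le_coe, coe_nnnorm, Real.coe_toNNReal']
      exact (hM t ht).trans (le_max_left _ _)
  refine ⟨L * M.toNNReal, fun h hh ↦ ?_⟩
  have := norm_sub_sub_smul_le_of_lipschitzOnWith_deriv hz (hL.comp hzL (mapsTo_image z _)) hh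
  rwa [sub_zero, sub_sub, ← norm_neg, neg_sub] at this

variable {m γ h : ℝ}

theorem norm_heavyBall_momentum_sub_initial_le (hγ : 0 ≤ γ) (hh : 0 ≤ h) (p₀ g₀ : E) :
    ‖(Real.exp (-γ * h) • p₀ - h • g₀) - p₀‖ ≤ (γ * ‖p₀‖ + ‖g₀‖) * h := by
  have hexp : |Real.exp (-γ * h) - 1| ≤ γ * h := by
    rw [abs_sub_comm, abs_of_nonneg (sub_nonneg.2 (Real.exp_le_one_iff.2 (by nlinarith)))]
    linarith [Real.add_one_le_exp (-γ * h)]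
  calc ‖(Real.exp (-γ * h) • p₀ - h • g₀) - p₀‖
      = ‖(Real.exp (-γ * h) - 1) • p₀ - h • g₀‖ := by rw [sub_smul, one_smul, sub_right_comm]
    _ ≤ |Real.exp (-γ * h) - 1| * ‖p₀‖ + h * ‖g₀‖ := by
      grw [norm_sub_le, norm_smul, norm_smul, Real.norm_eq_abs, Real.norm_of_nonneg hh]
    _ ≤ γ * h * ‖p₀‖ + h * ‖g₀‖ := by gcongr
    _ = (γ * ‖p₀‖ + ‖g₀‖) * h := by ring

theorem norm_heavyBall_momentum_sub_le (hγ : 0 ≤ γ) (hh : 0 ≤ h) (p₀ p₁ g₀ : E) :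
    ‖(Real.exp (-γ * h) • p₀ - h • g₀) - p₁‖
      ≤ γ ^ 2 / 2 * ‖p₀‖ * h ^ 2 + ‖p₀ + h • (-g₀ - γ • p₀) - p₁‖ := calc
  ‖(Real.exp (-γ * h) • p₀ - h • g₀) - p₁‖
      ≤ ‖(Real.exp (-γ * h) • p₀ - h • g₀) - (p₀ + h • (-g₀ - γ • p₀))‖
        + ‖p₀ + h • (-g₀ - γ • p₀) - p₁‖ := norm_sub_le_norm_sub_add_norm_sub _ _ _
  _ = |Real.exp (-(γ * h)) - 1 + γ * h| * ‖p₀‖ + ‖p₀ + h • (-g₀ - γ • p₀) - p₁‖ := by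
      rw [← Real.norm_eq_abs, ← norm_smul, neg_mul]
      congr 2
      module
  _ ≤ (γ * h) ^ 2 / 2 * ‖p₀‖ + ‖p₀ + h • (-g₀ - γ • p₀) - p₁‖ := by
      gcongr
      exact Real.abs_exp_neg_sub_one_add_le (by positivity)
  _ = γ ^ 2 / 2 * ‖p₀‖ * h ^ 2 + ‖p₀ + h • (-g₀ - γ • p₀) - p₁‖ := by ring

theorem norm_heavyBall_position_sub_le (hm : 0 < m) (hγ : 0 ≤ γ) (hh : 0 ≤ h) (x₀ x₁ p₀ g₀ : E) :
    ‖x₀ + (h / m) • (Real.exp (-γ * h) • p₀ - h • g₀) - x₁‖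
      ≤ (γ * ‖p₀‖ + ‖g₀‖) / m * h ^ 2 + ‖x₀ + h • ((1 / m) • p₀) - x₁‖ := calc
  ‖x₀ + (h / m) • (Real.exp (-γ * h) • p₀ - h • g₀) - x₁‖
      ≤ ‖x₀ + (h / m) • (Real.exp (-γ * h) • p₀ - h • g₀) - (x₀ + h • ((1 / m) • p₀))‖
        + ‖x₀ + h • ((1 / m) • p₀) - x₁‖ := norm_sub_le_norm_sub_add_norm_sub _ _ _
  _ = h / m * ‖(Real.exp (-γ * h) • p₀ - h • g₀) - p₀‖ + ‖x₀ + h • ((1 / m) • p₀) - x₁‖ := by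
      rw [show x₀ + (h / m) • (Real.exp (-γ * h) • p₀ - h • g₀) - (x₀ + h • ((1 / m) • p₀))
          = (h / m) • ((Real.exp (-γ * h) • p₀ - h • g₀) - p₀) by module,
        norm_smul, Real.norm_of_nonneg (by positivity)]
  _ ≤ h / m * ((γ * ‖p₀‖ + ‖g₀‖) * h) + ‖x₀ + h • ((1 / m) • p₀) - x₁‖ := by
      grw [norm_heavyBall_momentum_sub_initial_le hγ hh]
  _ = (γ * ‖p₀‖ + ‖g₀‖) / m * h ^ 2 + ‖x₀ + h • ((1 / m) • p₀) - x₁‖ := by ring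

end

/-- the heavy-ball (classical momentum) method has local error
of order `h²` (it is an integrator of order 1) for the conformal Hamiltonian
system `ẋ = p/m`, `ṗ = −∇f(x) − γp`. -/
theorem heavyBall_local_error_order_one
    {n : ℕ} (f : EuclideanSpace ℝ (Fin n) → ℝ) (hf : ContDiff ℝ 2 f)
    (m γ T : ℝ) (hm : 0 < m) (hγ : 0 ≤ γ) (hT : 0 < T)
    (x p : ℝ → EuclideanSpace ℝ (Fin n))
    (hx : ∀ t ∈ Set.Icc (0 : ℝ) T,
      HasDerivWithinAt x ((1 / m) • p t) (Set.Icc 0 T) t)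
    (hp : ∀ t ∈ Set.Icc (0 : ℝ) T,
      HasDerivWithinAt p (-(gradient f (x t)) - γ • p t) (Set.Icc 0 T) t) :
    ∃ C > 0, ∃ ε ∈ Set.Ioc (0 : ℝ) T, ∀ h ∈ Set.Ioc (0 : ℝ) ε,
      ‖(x 0 + (h / m) • (Real.exp (-γ * h) • p 0 - h • gradient f (x 0))) - x h‖
        + ‖(Real.exp (-γ * h) • p 0 - h • gradient f (x 0)) - p h‖ ≤ C * h ^ 2 := by
  have hg : ContDiff ℝ 1 (gradient f) := hf.gradient le_rfl
  have hF : LocallyLipschitz fun z : EuclideanSpace ℝ (Fin n) × EuclideanSpace ℝ (Fin n) ↦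
      ((1 / m) • z.2, -gradient f z.1 - γ • z.2) :=
    ContDiff.locallyLipschitz (𝕂 := ℝ) (by fun_prop)
  obtain ⟨K, hK⟩ := hF.exists_norm_add_smul_sub_le (z := fun t ↦ (x t, p t))
    fun t ht ↦ (hx t ht).prodMk (hp t ht)
  refine ⟨(γ * ‖p 0‖ + ‖gradient f (x 0)‖) / m + γ ^ 2 / 2 * ‖p 0‖ + 2 * K + 1, by positivity,
    T, ⟨hT, le_rfl⟩, fun h hh ↦ ?_⟩
  have hEuler := hK h ⟨hh.1.le, hh.2⟩
  have hX := (norm_heavyBall_position_sub_le hm hγ hh.1.le (x 0) (x h) (p 0)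
    (gradient f (x 0))).trans (add_le_add_right ((norm_fst_le _).trans hEuler) _)
  have hP := (norm_heavyBall_momentum_sub_le hγ hh.1.le (p 0) (p h)
    (gradient f (x 0))).trans (add_le_add_right ((norm_snd_le _).trans hEuler) _)
  linarith [add_le_add hX hP, sq_nonneg h]
end

section
/- Let f : ℝⁿ → ℝ be twice continuously differentiable, m > 0, γ ≥ 0, h > 0, and define the shadow Hamiltonian H̃(x, p) = ‖p‖²/(2m) + f(x) − (hγ/(4m)) ‖p‖² − (h/(2m)) ⟨∇f(x), p⟩ + (hγ/2) f(x). Then for all (x, p) ∈ ℝⁿ × ℝⁿ the conformal Hamiltonian vector field of H̃ with damping γ coincides with the modified heavy-ball vector field: ∇_p H̃(x, p) = p/m − (hγ/(2m)) p − (h/(2m)) ∇f(x), and −∇_x H̃(x, p) − γ p = −∇f(x) − γ p − (hγ/2) ∇f(x) + (h/(2m)) ∇²f(x) p. In particular, the modified (shadow) system of the classical momentum method, ẋ = p/m − (hγ/(2m)) p − (h/(2m)) ∇f(x), ṗ = −∇f(x) − γp − (hγ/2) ∇f(x) + (h/(2m)) ∇²f(x) p, is itself a conformal Hamiltonian system with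 Hamiltonian H̃ and damping γ. -/
/-!
Both identities are gradient computations for a function that is quadratic in `p`.
The only term needing an idea is `⟪∇f(x), p⟫`: its `x`-gradient is `∇²f(x) p`, since
`⟪∇f(y), p⟫ = Df(y) p` and the second derivative of a `C²` function is symmetric.
-/

open InnerProductSpace
open scoped Gradient

section GradientCalculus

variable {E : Type*} [NormedAddCommGroup E] [InnerProductSpace ℝ E] [CompleteSpace E]
  {f g : E → ℝ} {f' g' x : E}

theorem HasGradientAt.sub (hf : HasGradientAt f f' x) (hg : HasGradientAt g g' x) :
    HasGradientAt (fun y => f y - g y) (f' - g') x := by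
  rw [hasGradientAt_iff_hasFDerivAt, map_sub]
  exact hf.hasFDerivAt.sub hg.hasFDerivAt

theorem HasGradientAt.const_mul (c : ℝ) (hf : HasGradientAt f f' x) :
    HasGradientAt (fun y => c * f y) (c • f') x := by
  rw [hasGradientAt_iff_hasFDerivAt, map_smul]
  exact hf.hasFDerivAt.const_mul c

theorem HasGradientAt.add_const (c : ℝ) (hf : HasGradientAt f f' x) :
    HasGradientAt (fun y => f y + c) f' x :=
  hasGradientAt_iff_hasFDerivAt.mpr (hf.hasFDerivAt.add_const c)

theorem hasGradientAt_norm_sq (x : E) : HasGradientAt (fun y => ‖y‖ ^ 2) ((2 : ℝ) • x) x := by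
  rw [hasGradientAt_iff_hasFDerivAt, map_smul, two_smul, ← two_nsmul]
  exact (hasStrictFDerivAt_norm_sq x).hasFDerivAt

theorem hasGradientAt_inner_right (a x : E) : HasGradientAt (fun y => ⟪a, y⟫_ℝ) a x :=
  hasGradientAt_iff_hasFDerivAt.mpr (innerSL ℝ a).hasFDerivAt

theorem ContDiffAt.hasGradientAt_inner_gradient_left (hf : ContDiffAt ℝ 2 f x) (v : E) :
    HasGradientAt (fun y => ⟪∇ f y, v⟫_ℝ) (fderiv ℝ (∇ f) x v) x := by
  set B := fderiv ℝ (fderiv ℝ f) x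
  have hB : HasFDerivAt (fderiv ℝ f) B x :=
    ((hf.fderiv_right (m := 1) le_rfl).differentiableAt one_ne_zero).hasFDerivAt
  have hsymm : B.flip v = B v := by
    ext w
    exact (hf.isSymmSndFDerivAt (by simp [minSmoothness_of_isRCLikeNormedField]) v w).symm
  have hgrad : fderiv ℝ (∇ f) x v = (toDual ℝ E).symm (B v) := by
    change fderiv ℝ ((toDual ℝ E).symm ∘ fderiv ℝ f) x v = _
    rw [LinearIsometryEquiv.comp_fderiv]
    rfl
  rw [hgrad, hasGradientAt_iff_hasFDerivAt, LinearIsometryEquiv.apply_symm_apply, ← hsymm]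
  simp_rw [inner_gradient_left]
  simpa using hB.clm_apply (hasFDerivAt_const v x)

end GradientCalculus

theorem shadow_hamiltonian_heavyBall_general
    {n : ℕ} (f : EuclideanSpace ℝ (Fin n) → ℝ) (hf : ContDiff ℝ 2 f)
    (m γ h : ℝ)
    (H : EuclideanSpace ℝ (Fin n) → EuclideanSpace ℝ (Fin n) → ℝ)
    (hH : ∀ x p, H x p = ‖p‖ ^ 2 / (2 * m) + f x - (h * γ / (4 * m)) * ‖p‖ ^ 2
      - (h / (2 * m)) * ⟪gradient f x, p⟫_ℝ + (h * γ / 2) * f x) :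
    ∀ x p : EuclideanSpace ℝ (Fin n),
      gradient (fun q => H x q) p
        = (1 / m) • p - (h * γ / (2 * m)) • p - (h / (2 * m)) • gradient f x
      ∧ -(gradient (fun y => H y p) x) - γ • p
        = -(gradient f x) - γ • p - (h * γ / 2) • gradient f x
          + (h / (2 * m)) • fderiv ℝ (gradient f) x p := by
  intro x p
  have hH_p : (fun q => H x q) = fun q =>
      (1 / (2 * m) - h * γ / (4 * m)) * ‖q‖ ^ 2 - h / (2 * m) * ⟪∇ f x, q⟫_ℝ
        + (1 + h * γ / 2) * f x := by
    funext q; rw [hH]; ring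
  have hH_x : (fun y => H y p) = fun y =>
      (1 + h * γ / 2) * f y - h / (2 * m) * ⟪∇ f y, p⟫_ℝ
        + (1 / (2 * m) - h * γ / (4 * m)) * ‖p‖ ^ 2 := by
    funext y; rw [hH]; ring
  have hgrad_f : HasGradientAt f (∇ f x) x :=
    (hf.differentiable (by norm_num) x).hasGradientAt
  refine ⟨?_, ?_⟩
  · rw [hH_p, ((((hasGradientAt_norm_sq p).const_mul _).sub
      ((hasGradientAt_inner_right _ p).const_mul _)).add_const _).gradient]
    module
  · rw [hH_x, (((hgrad_f.const_mul _).sub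
      ((hf.contDiffAt.hasGradientAt_inner_gradient_left p).const_mul _)).add_const _).gradient]
    module

/-- the modified (shadow) heavy-ball system is a conformal
Hamiltonian system with shadow Hamiltonian
`H̃(x,p) = ‖p‖²/(2m) + f(x) − (hγ/(4m))‖p‖² − (h/(2m))⟨∇f(x), p⟩ + (hγ/2) f(x)`
and damping `γ`: the `p`-gradient of `H̃` gives the modified `ẋ` field and
`−∇ₓH̃ − γp` gives the modified `ṗ` field. -/
theorem shadow_hamiltonian_heavyBall
    {n : ℕ} (f : EuclideanSpace ℝ (Fin n) → ℝ) (hf : ContDiff ℝ 2 f)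
    (m γ h : ℝ) (hm : 0 < m) (hγ : 0 ≤ γ) (hh : 0 < h)
    (H : EuclideanSpace ℝ (Fin n) → EuclideanSpace ℝ (Fin n) → ℝ)
    (hH : ∀ x p, H x p = ‖p‖ ^ 2 / (2 * m) + f x - (h * γ / (4 * m)) * ‖p‖ ^ 2
      - (h / (2 * m)) * ⟪gradient f x, p⟫_ℝ + (h * γ / 2) * f x) :
    ∀ x p : EuclideanSpace ℝ (Fin n),
      gradient (fun q => H x q) p
        = (1 / m) • p - (h * γ / (2 * m)) • p - (h / (2 * m)) • gradient f x
      ∧ -(gradient (fun y => H y p) x) - γ • p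
        = -(gradient f x) - γ • p - (h * γ / 2) • gradient f x
          + (h / (2 * m)) • fderiv ℝ (gradient f) x p :=
  shadow_hamiltonian_heavyBall_general f hf m γ h H hH
end

section
/- Fix λ > 0, m > 0, h > 0, γ ≥ 0, and set μ = e^{−γh} and s = 1 − h²λ/m. Consider the 2 × 2 transition matrix of Nesterov's method applied to the quadratic f(x) = (λ/2)x²: T_NAG = [[s, (h/m) μ s], [−hλ, μ s]]. Then: (i) det T_NAG = μ s = e^{−γh}(1 − h²λ/m); and (ii) every non-real complex eigenvalue z of T_NAG lies on the circle centered at μ/(1+μ) of radius μ/(1+μ), i.e., |z − μ/(1+μ)| = μ/(1+μ) = 1/(e^{γh} + 1). -/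
/-!
A non-real eigenvalue `z` of a real `2 × 2` matrix `T` is a root of `z² - (tr T) z + det T`
together with `conj z`, so `2 re z = tr T` and `|z|² = det T`. If `det T = c · tr T` with
`c` real, then `|z - c|² = |z|² - 2c re z + c² = c²`. For the Nesterov matrix
`tr T = s(1 + μ)` and `det T = μ s`, so `c = μ/(1 + μ)`.
-/

open Complex

theorem Matrix.det_smul_one_sub_fin_two {R : Type*} [CommRing R]
    (A : Matrix (Fin 2) (Fin 2) R) (z : R) :
    (z • (1 : Matrix (Fin 2) (Fin 2) R) - A).det = z ^ 2 - A.trace * z + A.det := by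
  simp [Matrix.det_fin_two, Matrix.trace_fin_two]
  ring

theorem Matrix.det_smul_one_sub_map_ofReal_fin_two (A : Matrix (Fin 2) (Fin 2) ℝ) (z : ℂ) :
    (z • (1 : Matrix (Fin 2) (Fin 2) ℂ) - A.map (fun r : ℝ => (r : ℂ))).det
      = z ^ 2 - A.trace * z + A.det := by
  rw [Matrix.det_smul_one_sub_fin_two, Matrix.det_fin_two A, Matrix.det_fin_two,
    Matrix.trace_fin_two A, Matrix.trace_fin_two]
  push_cast
  rfl

theorem Complex.norm_sub_ofReal_eq_of_sq_sub_mul_add_mul_eq_zero {z : ℂ} {t c : ℝ}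
    (hz : z ^ 2 - t * z + (c * t : ℝ) = 0) (him : z.im ≠ 0) :
    ‖z - c‖ = |c| := by
  have hre := congrArg Complex.re hz
  have him' := congrArg Complex.im hz
  simp only [sq, sub_re, add_re, mul_re, ofReal_re, ofReal_im, sub_im, add_im, mul_im,
    zero_re, zero_im] at hre him'
  have hsum : z.re = t / 2 := by
    have : (2 * z.re - t) * z.im = 0 := by linarith
    linarith [(mul_eq_zero.mp this).resolve_right him]
  rw [← abs_norm, ← sq_eq_sq_iff_abs_eq_abs, Complex.sq_norm, Complex.normSq_apply]
  simp only [sub_re, sub_im, ofReal_re, ofReal_im, sub_zero]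
  linear_combination -hre + 2 * (z.re - c) * hsum

theorem nesterov_transition_matrix_spectrum_general
    (lam m h γ : ℝ)
    (μ s : ℝ) (hμ : μ = Real.exp (-γ * h)) (hs : s = 1 - h ^ 2 * lam / m)
    (T : Matrix (Fin 2) (Fin 2) ℝ)
    (hT : T = !![s, (h / m) * μ * s; -h * lam, μ * s]) :
    T.det = μ * s
    ∧ μ / (1 + μ) = 1 / (Real.exp (γ * h) + 1)
    ∧ ∀ z : ℂ,
        (z • (1 : Matrix (Fin 2) (Fin 2) ℂ) - T.map (fun r : ℝ => (r : ℂ))).det = 0 →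
        z.im ≠ 0 →
        ‖z - ((μ / (1 + μ) : ℝ) : ℂ)‖ = μ / (1 + μ) := by
  have hμ_pos : 0 < μ := hμ ▸ Real.exp_pos _
  have hdet : T.det = μ * s := by
    rw [hT, Matrix.det_fin_two_of, hs]
    ring
  have htrace : T.trace = s * (1 + μ) := by
    rw [hT, Matrix.trace_fin_two_of]
    ring
  have hdet_eq : μ * s = μ / (1 + μ) * (s * (1 + μ)) := by
    field_simp
  refine ⟨hdet, ?_, fun z hz him => ?_⟩
  · rw [hμ, neg_mul, Real.exp_neg]
    field_simp
  · rw [Matrix.det_smul_one_sub_map_ofReal_fin_two, hdet, htrace, hdet_eq] at hz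
    rw [Complex.norm_sub_ofReal_eq_of_sq_sub_mul_add_mul_eq_zero hz him, abs_of_pos (by positivity)]

/-- for the quadratic `f(x) = (λ/2)x²`, the Nesterov transition
matrix `T_NAG = [[s, (h/m)μs], [−hλ, μs]]`, with `μ = e^{−γh}` and
`s = 1 − h²λ/m`, satisfies (i) `det T_NAG = μs`, and (ii) every non-real
complex eigenvalue `z` of `T_NAG` lies on the circle centered at `μ/(1+μ)`
of radius `μ/(1+μ) = 1/(e^{γh} + 1)`. -/
theorem nesterov_transition_matrix_spectrum
    (lam m h γ : ℝ) (hlam : 0 < lam) (hm : 0 < m) (hh : 0 < h) (hγ : 0 ≤ γ)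
    (μ s : ℝ) (hμ : μ = Real.exp (-γ * h)) (hs : s = 1 - h ^ 2 * lam / m)
    (T : Matrix (Fin 2) (Fin 2) ℝ)
    (hT : T = !![s, (h / m) * μ * s; -h * lam, μ * s]) :
    T.det = μ * s
    ∧ μ / (1 + μ) = 1 / (Real.exp (γ * h) + 1)
    ∧ ∀ z : ℂ,
        (z • (1 : Matrix (Fin 2) (Fin 2) ℂ) - T.map (fun r : ℝ => (r : ℂ))).det = 0 →
        z.im ≠ 0 →
        ‖z - ((μ / (1 + μ) : ℝ) : ℂ)‖ = μ / (1 + μ) :=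
  nesterov_transition_matrix_spectrum_general lam m h γ μ s hμ hs T hT
end
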